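/- Let $T_1$ and $T_2$ be adjacent transition intervals in the grid construction with levels $t_1, t_2$ respectively. Then exactly one of the following holds: (1) $T_1$ and $T_2$ have a common $\mathcal{K}$-ancestor $K$, and $K$ is at most two $\mathcal{K}$-levels above each of $T_1, T_2$ (i.e. if $T_i \in \mathcal{K}_{t_i}$ then $K \in \mathcal{K}_{t_i - 1} \cup \mathcal{K}_{t_i - 2}$); or (2) $T_1$ and $T_2$ have no common $\mathcal{K}$-ancestor, and both $T_1, T_2 \in \mathcal{K}_1$. -/

import Mathlib

open Set

/-- `L t = k₁ + ⋯ + k_t`, the dyadic depth of the grid `𝒦_t`. -/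
def Lsum (k : ℕ → ℕ) (t : ℕ) : ℕ := ∑ i ∈ Finset.range t, k (i + 1)

/-- The common length `2^{-L t}` of the intervals of `𝒦_t`. -/
noncomputable def klen (k : ℕ → ℕ) (t : ℕ) : ℝ := (2 : ℝ) ^ (-(Lsum k t : ℤ))

/-- The interval of `𝒦_t` with index `j`: `[j 2^{-L t}, (j+1) 2^{-L t})`. -/
noncomputable def kSet (k : ℕ → ℕ) (t : ℕ) (j : ℤ) : Set ℝ :=
  Set.Ico ((j : ℝ) * klen k t) (((j : ℝ) + 1) * klen k t)

/-- The index of the `𝒦`-parent (in `𝒦_t`) of the interval of `𝒦_{t+1}` with index `j`. -/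
def kParIdx (k : ℕ → ℕ) (t : ℕ) (j : ℤ) : ℤ := Int.fdiv j (2 ^ k (t + 1))

/-- The interval of `𝒦_{t+1}` with index `j` has its standard dyadic parent `π_𝒟 R`
sharing a boundary point with its `𝒦`-parent `Q ∈ 𝒦_t` (`∂Q ∩ ∂(π_𝒟 R) ≠ ∅`). -/
noncomputable def touches (k : ℕ → ℕ) (t : ℕ) (j : ℤ) : Prop :=
  (frontier (kSet k t (kParIdx k t j)) ∩
    frontier (Set.Ico ((Int.fdiv j 2 : ℝ) * (2 * klen k (t + 1)))
      (((Int.fdiv j 2 : ℝ) + 1) * (2 * klen k (t + 1))))).Nonempty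

/-- Membership in `𝒦̂_t`: the `𝒦`-parent lies in `𝒦̂_{t-1}` and the interval is
not a transition interval. -/
def hatK (k : ℕ → ℕ) : ℕ → ℤ → Prop
  | 0, _ => True
  | t + 1, j => hatK k t (kParIdx k t j) ∧ ¬ touches k t j

/-- The interval of `𝒦_t` with index `j` is a transition interval. -/
def isTransition (k : ℕ → ℕ) : ℕ → ℤ → Prop
  | 0, _ => False
  | t + 1, j => hatK k t (kParIdx k t j) ∧ touches k t j

/-- The `𝒦`-parent map on the pairs (level, index). -/
def kParentFn (k : ℕ → ℕ) : ℕ × ℤ → ℕ × ℤ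
  | (0, j) => (0, j)
  | (t + 1, j) => (t, kParIdx k t j)

/-- `A` is a `𝒦`-ancestor of `B`. -/
def isKAncestor (k : ℕ → ℕ) (A B : ℕ × ℤ) : Prop :=
  ∃ m : ℕ, (kParentFn k)^[m] B = A

/-!
Every 𝒦-ancestor of a transition interval at a level `≥ 1` lies in `𝒦̂`, so it is neither the
first nor the last child of its own 𝒦-parent: such an edge child always touches the boundary of
its parent, because `k ≥ 1` puts its dyadic parent at the same edge.

Let `t₁ ≤ t₂`. Adjacency makes `T₂` the first descendant of the right neighbour of `T₁` at level
`t₁`, or the last descendant of its left neighbour. If `t₂ ≥ t₁ + 2`, the ancestor of `T₂` at level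
`t₁ + 1` would be an edge child lying in `𝒦̂`, which is impossible. If `t₂ = t₁ + 1`, the parent of
`T₂` is a neighbour of `T₁` lying in `𝒦̂`, so it has the same parent as `T₁`. If `t₂ = t₁`, the two
neighbours either share their parent, or have neighbouring parents which, when `t₁ ≥ 2`, lie in `𝒦̂`
and therefore share their parent; when `t₁ = 1` distinct neighbouring parents leave no common
ancestor.
-/

theorem Int.mul_sub_one_ediv {y M : ℤ} (hM : 0 < M) : (y * M - 1) / M = y - 1 := by
  rw [Int.ediv_eq_iff_of_pos hM, sub_mul, one_mul]
  constructor <;> linarith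

theorem eq_or_eq_of_Icc_inter_nonempty_of_disjoint_Ioo {α : Type*} [LinearOrder α]
    [DenselyOrdered α] {a₁ b₁ a₂ b₂ : α} (h₁ : a₁ < b₁) (h₂ : a₂ < b₂)
    (hx : (Icc a₁ b₁ ∩ Icc a₂ b₂).Nonempty) (hd : Disjoint (Ioo a₁ b₁) (Ioo a₂ b₂)) :
    b₁ = a₂ ∨ b₂ = a₁ := by
  obtain ⟨x, ⟨hx₁, hx₁'⟩, hx₂, hx₂'⟩ := hx
  rw [Ioo_disjoint_Ioo, min_le_iff, le_max_iff, le_max_iff] at hd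
  rcases hd with (h | h) | (h | h)
  all_goals first | (left; order) | (right; order)

def kAdjacent (k : ℕ → ℕ) (t₁ : ℕ) (j₁ : ℤ) (t₂ : ℕ) (j₂ : ℤ) : Prop :=
  (closure (kSet k t₁ j₁) ∩ closure (kSet k t₂ j₂)).Nonempty ∧
    Disjoint (interior (kSet k t₁ j₁)) (interior (kSet k t₂ j₂))

section Grid

variable {k : ℕ → ℕ}

theorem kAdjacent.symm {t₁ t₂ : ℕ} {j₁ j₂ : ℤ} (h : kAdjacent k t₁ j₁ t₂ j₂) :
    kAdjacent k t₂ j₂ t₁ j₁ :=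
  ⟨by rw [inter_comm]; exact h.1, h.2.symm⟩

theorem Lsum_succ (t : ℕ) : Lsum k (t + 1) = Lsum k t + k (t + 1) :=
  Finset.sum_range_succ _ _

theorem Lsum_mono : Monotone (Lsum k) := fun _ _ h =>
  Finset.sum_le_sum_of_subset (Finset.range_subset_range.2 h)

theorem klen_pos (t : ℕ) : 0 < klen k t := zpow_pos two_pos _

theorem klen_eq_pow_mul {s t : ℕ} (h : s ≤ t) :
    klen k s = (2 : ℝ) ^ (Lsum k t - Lsum k s) * klen k t := by
  rw [klen, klen, ← zpow_natCast, ← zpow_add₀ two_ne_zero]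
  push_cast [Lsum_mono h]
  ring_nf

theorem klen_succ (t : ℕ) : klen k t = (2 : ℝ) ^ k (t + 1) * klen k (t + 1) := by
  rw [klen_eq_pow_mul t.le_succ, Lsum_succ, Nat.add_sub_cancel_left]

theorem kParIdx_eq_ediv (t : ℕ) (j : ℤ) : kParIdx k t j = j / 2 ^ k (t + 1) :=
  Int.fdiv_eq_ediv_of_nonneg _ (by positivity)

theorem kParIdx_eq_iff {t : ℕ} {j q : ℤ} :
    kParIdx k t j = q ↔ q * 2 ^ k (t + 1) ≤ j ∧ j < q * 2 ^ k (t + 1) + 2 ^ k (t + 1) := by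
  rw [kParIdx_eq_ediv, Int.ediv_eq_iff_of_pos (by positivity)]

theorem kParIdx_ediv_pow {s u : ℕ} (hs : s ≤ u) (j : ℤ) :
    kParIdx k u j / 2 ^ (Lsum k u - Lsum k s) = j / 2 ^ (Lsum k (u + 1) - Lsum k s) := by
  rw [kParIdx_eq_ediv, Int.ediv_ediv_of_nonneg (by positivity), ← pow_add]
  have := Lsum_mono (k := k) hs
  rw [Lsum_succ]
  congr 2
  omega

theorem closure_kSet (t : ℕ) (j : ℤ) :
    closure (kSet k t j) = Icc ((j : ℝ) * klen k t) ((j + 1) * klen k t) :=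
  closure_Ico (by nlinarith [klen_pos (k := k) t] : (j : ℝ) * klen k t < (j + 1) * klen k t).ne

theorem interior_kSet (t : ℕ) (j : ℤ) :
    interior (kSet k t j) = Ioo ((j : ℝ) * klen k t) ((j + 1) * klen k t) :=
  interior_Ico

theorem frontier_kSet (t : ℕ) (j : ℤ) :
    frontier (kSet k t j) = {(j : ℝ) * klen k t, (j + 1) * klen k t} :=
  frontier_Ico (by nlinarith [klen_pos (k := k) t])

theorem kAdjacent.index_eq {t₁ t₂ : ℕ} {j₁ j₂ M : ℤ} (hM : klen k t₁ = M * klen k t₂)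
    (h : kAdjacent k t₁ j₁ t₂ j₂) : (j₁ + 1) * M = j₂ ∨ j₁ * M = j₂ + 1 := by
  have hl := klen_pos (k := k) t₂
  obtain ⟨hx, hd⟩ := h
  rw [closure_kSet, closure_kSet] at hx
  rw [interior_kSet, interior_kSet] at hd
  have := eq_or_eq_of_Icc_inter_nonempty_of_disjoint_Ioo
    (by nlinarith [klen_pos (k := k) t₁]) (by nlinarith) hx hd
  rw [hM] at this
  refine this.imp (fun h => ?_) (fun h => ?_)
  · exact_mod_cast (mul_right_cancel₀ hl.ne' (by linear_combination h) : ((j₁ + 1) * M : ℝ) = j₂)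
  · exact_mod_cast (mul_right_cancel₀ hl.ne' (by linear_combination -h) : (j₁ * M : ℝ) = j₂ + 1)

theorem kParIdx_mul (t : ℕ) (c : ℤ) : kParIdx k t (c * 2 ^ k (t + 1)) = c := by
  rw [kParIdx_eq_ediv, Int.mul_ediv_cancel _ (by positivity)]

theorem kParIdx_mul_sub_one (t : ℕ) (c : ℤ) : kParIdx k t (c * 2 ^ k (t + 1) - 1) = c - 1 := by
  rw [kParIdx_eq_ediv, Int.mul_sub_one_ediv (by positivity)]

theorem touches_mul {t : ℕ} (hk : 1 ≤ k (t + 1)) (c : ℤ) : touches k t (c * 2 ^ k (t + 1)) := by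
  set N : ℤ := 2 ^ k (t + 1) with hN
  have hlen : klen k t = N * klen k (t + 1) := by rw [klen_succ, hN]; push_cast; rfl
  have hl := klen_pos (k := k) (t + 1)
  have h2 : ((c * N / 2 : ℤ) : ℝ) * 2 = c * N := by
    exact_mod_cast Int.ediv_mul_cancel (dvd_mul_of_dvd_right (dvd_pow_self 2 (by omega)) c)
  refine ⟨c * klen k t, ?_, ?_⟩
  · rw [frontier_kSet, kParIdx_mul]
    exact Or.inl rfl
  · rw [Int.fdiv_eq_ediv_of_nonneg _ zero_le_two, frontier_Ico (by nlinarith)]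
    left
    rw [hlen]
    linear_combination -klen k (t + 1) * h2

theorem touches_mul_sub_one {t : ℕ} (hk : 1 ≤ k (t + 1)) (c : ℤ) :
    touches k t (c * 2 ^ k (t + 1) - 1) := by
  set N : ℤ := 2 ^ k (t + 1) with hN
  have hlen : klen k t = N * klen k (t + 1) := by rw [klen_succ, hN]; push_cast; rfl
  have hl := klen_pos (k := k) (t + 1)
  have h2N : (2 : ℤ) ∣ c * N := dvd_mul_of_dvd_right (dvd_pow_self 2 (by omega)) c
  have h2 : (((c * N - 1) / 2 : ℤ) : ℝ) * 2 + 2 = c * N := by exact_mod_cast (by omega)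
  refine ⟨c * klen k t, ?_, ?_⟩
  · rw [frontier_kSet, kParIdx_mul_sub_one]
    right
    rw [mem_singleton_iff]
    push_cast
    ring
  · rw [Int.fdiv_eq_ediv_of_nonneg _ zero_le_two, frontier_Ico (by nlinarith)]
    right
    rw [mem_singleton_iff, hlen]
    linear_combination -klen k (t + 1) * h2

theorem kParIdx_succ_eq_or (t : ℕ) (a : ℤ) :
    kParIdx k t (a + 1) = kParIdx k t a ∨ a + 1 = (kParIdx k t a + 1) * 2 ^ k (t + 1) := by
  obtain ⟨h₁, h₂⟩ := kParIdx_eq_iff.1 (rfl : kParIdx k t a = _)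
  rcases (by linarith : a + 1 ≤ kParIdx k t a * 2 ^ k (t + 1) + 2 ^ k (t + 1)).lt_or_eq with h | h
  · exact Or.inl (kParIdx_eq_iff.2 ⟨by linarith, h⟩)
  · exact Or.inr (by rw [h]; ring)

theorem kParIdx_eq_of_consecutive {t : ℕ} (hk : 1 ≤ k (t + 1)) {a b : ℤ}
    (hab : a + 1 = b ∨ a = b + 1) (ha : ¬ touches k t a) : kParIdx k t a = kParIdx k t b := by
  rcases hab with rfl | rfl
  · refine ((kParIdx_succ_eq_or t a).resolve_right fun h => ha ?_).symm
    rw [eq_sub_of_add_eq h]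
    exact touches_mul_sub_one hk _
  · refine (kParIdx_succ_eq_or t b).resolve_right fun h => ha ?_
    rw [h]
    exact touches_mul hk _

theorem kParIdx_consecutive {t : ℕ} {a b : ℤ} (hab : a + 1 = b ∨ a = b + 1)
    (hne : kParIdx k t a ≠ kParIdx k t b) :
    kParIdx k t a + 1 = kParIdx k t b ∨ kParIdx k t a = kParIdx k t b + 1 := by
  rcases hab with rfl | rfl
  · rcases kParIdx_succ_eq_or t a with h | h
    · exact absurd h.symm hne
    · exact Or.inl (by rw [h, kParIdx_mul])
  · rcases kParIdx_succ_eq_or t b with h | h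
    · exact absurd h hne
    · exact Or.inr (by rw [h, kParIdx_mul])

theorem hatK_ediv_pow {s t : ℕ} {j : ℤ} (h : hatK k t j) (hs : s ≤ t) :
    hatK k s (j / 2 ^ (Lsum k t - Lsum k s)) := by
  induction t generalizing j with
  | zero =>
    obtain rfl : s = 0 := by omega
    trivial
  | succ t ih =>
    rcases hs.eq_or_lt with rfl | hs
    · simpa using h
    · rw [← kParIdx_ediv_pow (by omega)]
      exact ih h.1 (by omega)

theorem isTransition.hatK_ediv_pow {s t : ℕ} {j : ℤ} (h : isTransition k t j) (hs : s < t) :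
    hatK k s (j / 2 ^ (Lsum k t - Lsum k s)) := by
  obtain ⟨u, rfl⟩ : ∃ u, t = u + 1 := ⟨t - 1, by omega⟩
  rw [← kParIdx_ediv_pow (by omega)]
  exact _root_.hatK_ediv_pow h.1 (by omega)

theorem isKAncestor_one {K : ℕ × ℤ} {j : ℤ} (h : isKAncestor k K (1, j)) :
    K = (1, j) ∨ K = (0, kParIdx k 0 j) := by
  obtain ⟨_ | m, rfl⟩ := h
  · exact Or.inl rfl
  · exact Or.inr (Function.iterate_fixed rfl m)

theorem not_exists_common_kAncestor_one {a b : ℤ} (hab : a ≠ b)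
    (hP : kParIdx k 0 a ≠ kParIdx k 0 b) :
    ¬ ∃ K : ℕ × ℤ, isKAncestor k K (1, a) ∧ isKAncestor k K (1, b) := by
  rintro ⟨K, ha, hb⟩
  rcases isKAncestor_one ha with rfl | rfl <;> rcases isKAncestor_one hb with h | h <;>
    simp_all [Prod.ext_iff]

theorem common_kAncestor_of_consecutive (hk : ∀ t, 1 ≤ k (t + 1)) {s : ℕ} {a b : ℤ}
    (hab : a + 1 = b ∨ a = b + 1) (ha : hatK k s (kParIdx k s a)) :
    (∃ K : ℕ × ℤ, isKAncestor k K (s + 1, a) ∧ isKAncestor k K (s + 1, b) ∧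
      (K.1 + 1 = s + 1 ∨ K.1 + 2 = s + 1) ∧ (K.1 + 1 = s + 1 ∨ K.1 + 2 = s + 1)) ∨
    ((¬ ∃ K : ℕ × ℤ, isKAncestor k K (s + 1, a) ∧ isKAncestor k K (s + 1, b)) ∧
      s + 1 = 1 ∧ s + 1 = 1) := by
  by_cases hP : kParIdx k s a = kParIdx k s b
  · exact Or.inl ⟨(s, kParIdx k s a), ⟨1, rfl⟩, ⟨1, congrArg (s, ·) hP.symm⟩,
      Or.inl rfl, Or.inl rfl⟩
  cases s with
  | zero => exact Or.inr ⟨not_exists_common_kAncestor_one (by omega) hP, rfl, rfl⟩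
  | succ u =>
    have hPP := kParIdx_eq_of_consecutive (hk u) (kParIdx_consecutive hab hP) ha.2
    exact Or.inl ⟨(u, kParIdx k u (kParIdx k (u + 1) a)), ⟨2, rfl⟩, ⟨2, congrArg (u, ·) hPP.symm⟩,
      Or.inr rfl, Or.inr rfl⟩

theorem common_kAncestor_of_kAdjacent_succ {s : ℕ} (hk : 1 ≤ k (s + 1)) {a j : ℤ}
    (hj : hatK k (s + 1) (kParIdx k (s + 1) j)) (hadj : kAdjacent k (s + 1) a (s + 2) j) :
    isKAncestor k (s, kParIdx k s a) (s + 1, a) ∧ isKAncestor k (s, kParIdx k s a) (s + 2, j) := by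
  have hscale : klen k (s + 1) = ((2 ^ k (s + 2) : ℤ) : ℝ) * klen k (s + 2) := by
    exact_mod_cast klen_succ (s + 1)
  have hP : kParIdx k (s + 1) j + 1 = a ∨ kParIdx k (s + 1) j = a + 1 := by
    rcases hadj.index_eq hscale with rfl | h
    · exact Or.inr (kParIdx_mul _ _)
    · rw [eq_sub_of_add_eq h.symm, kParIdx_mul_sub_one]
      exact Or.inl (sub_add_cancel a 1)
  exact ⟨⟨1, rfl⟩, ⟨2, congrArg (s, ·) (kParIdx_eq_of_consecutive hk hP hj.2)⟩⟩

theorem not_kAdjacent_of_add_two_le {t t₂ : ℕ} (hk : 1 ≤ k (t + 1)) {j j₂ : ℤ}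
    (h₂ : isTransition k t₂ j₂) (ht : t + 2 ≤ t₂) : ¬ kAdjacent k t j t₂ j₂ := by
  intro hadj
  have hM : (0 : ℤ) < 2 ^ (Lsum k t₂ - Lsum k (t + 1)) := by positivity
  have hscale : klen k t =
      ((2 ^ k (t + 1) * 2 ^ (Lsum k t₂ - Lsum k (t + 1)) : ℤ) : ℝ) * klen k t₂ := by
    rw [klen_succ, klen_eq_pow_mul (by omega : t + 1 ≤ t₂)]
    push_cast
    ring
  apply (h₂.hatK_ediv_pow (by omega : t + 1 < t₂)).2
  rcases hadj.index_eq hscale with h | h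
  · rw [← h, ← mul_assoc, Int.mul_ediv_cancel _ hM.ne']
    exact touches_mul hk _
  · rw [eq_sub_of_add_eq h.symm, ← mul_assoc, Int.mul_sub_one_ediv hM]
    exact touches_mul_sub_one hk _

end Grid

theorem stmt19_general (k : ℕ → ℕ) (hk : ∀ t, 1 ≤ k (t + 1))
    (t1 t2 : ℕ) (j1 j2 : ℤ)
    (h1 : isTransition k t1 j1) (h2 : isTransition k t2 j2)
    (hadj : (closure (kSet k t1 j1) ∩ closure (kSet k t2 j2)).Nonempty ∧
      Disjoint (interior (kSet k t1 j1)) (interior (kSet k t2 j2))) :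
    (∃ K : ℕ × ℤ, isKAncestor k K (t1, j1) ∧ isKAncestor k K (t2, j2) ∧
      (K.1 + 1 = t1 ∨ K.1 + 2 = t1) ∧ (K.1 + 1 = t2 ∨ K.1 + 2 = t2)) ∨
    ((¬ ∃ K : ℕ × ℤ, isKAncestor k K (t1, j1) ∧ isKAncestor k K (t2, j2)) ∧
      t1 = 1 ∧ t2 = 1) := by
  wlog hle : t1 ≤ t2 generalizing t1 t2 j1 j2
  · rcases this t2 t1 j2 j1 h2 h1 (kAdjacent.symm hadj) (by omega) with
      ⟨K, hK2, hK1, hl2, hl1⟩ | ⟨hno, ht2, ht1⟩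
    · exact Or.inl ⟨K, hK1, hK2, hl1, hl2⟩
    · exact Or.inr ⟨fun ⟨K, hK1, hK2⟩ => hno ⟨K, hK2, hK1⟩, ht1, ht2⟩
  cases t1 with
  | zero => exact h1.elim
  | succ s =>
    obtain rfl | rfl | hfar : t2 = s + 1 ∨ t2 = s + 2 ∨ s + 3 ≤ t2 := by omega
    · have hab := kAdjacent.index_eq (M := 1) (by simp) hadj
      exact common_kAncestor_of_consecutive hk (by simpa using hab) h1.1
    · obtain ⟨hK1, hK2⟩ := common_kAncestor_of_kAdjacent_succ (hk s) h2.1 hadj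
      exact Or.inl ⟨_, hK1, hK2, Or.inl rfl, Or.inr rfl⟩
    · exact absurd hadj (not_kAdjacent_of_add_two_le (hk (s + 1)) h2 hfar)

/-- Two adjacent transition intervals either have a common `𝒦`-ancestor at most two
`𝒦`-levels above each of them, or have no common `𝒦`-ancestor and both lie in `𝒦₁`. -/
theorem stmt19 (k : ℕ → ℕ) (hk : ∀ t, 1 ≤ k (t + 1))
    (t1 t2 : ℕ) (j1 j2 : ℤ)
    (h1 : isTransition k t1 j1) (h2 : isTransition k t2 j2)
    (hne : (t1, j1) ≠ (t2, j2))
    (hadj : (closure (kSet k t1 j1) ∩ closure (kSet k t2 j2)).Nonempty ∧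
      Disjoint (interior (kSet k t1 j1)) (interior (kSet k t2 j2))) :
    (∃ K : ℕ × ℤ, isKAncestor k K (t1, j1) ∧ isKAncestor k K (t2, j2) ∧
      (K.1 + 1 = t1 ∨ K.1 + 2 = t1) ∧ (K.1 + 1 = t2 ∨ K.1 + 2 = t2)) ∨
    ((¬ ∃ K : ℕ × ℤ, isKAncestor k K (t1, j1) ∧ isKAncestor k K (t2, j2)) ∧
      t1 = 1 ∧ t2 = 1) :=
  stmt19_general k hk t1 t2 j1 j2 h1 h2 hadj
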